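/- Let α_1 ∈ (1/2, 1) be irrational with convergent denominators (q_k)_{k≥0}, and set α = (α_1, 1 − α_1) ∈ ℝ². Fix 1 ≤ q ≤ ∞. Then for every i ≥ 1 and every n with q_{i+1} + 1 ≤ n ≤ q_{i+2}, one has h_1(n) = q_{i+1}. -/

import Mathlib

open scoped BigOperators ENNReal NNReal

/-!
For `α = (α₁, 1 - α₁)` both coordinates of `z_j - z_1` have the same torus norm `‖(j - 1) α₁‖`,
so `d_q(z_1, z_j)` is a fixed multiple of `‖(j - 1) α₁‖` and the nearest neighbour of `z_1` in
`S_n` is `z_{k+1}` for the `1 ≤ k < n` minimising `‖k α₁‖`. Since `n ≤ q_{i+2}`, the best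
approximation property of the convergent denominators says that this minimiser is `k = q_{i+1}`,
and that it is unique. Best approximation comes from two facts: `q_m α - p_m = (-1)^m t_0 ⋯ t_m`
with `t_j = G^j(α)` the orbit of `α` under the Gauss map, so consecutive errors alternate in sign;
and `(q_m, p_m), (q_{m+1}, p_{m+1})` is a basis of `ℤ²`. Writing `(k, l)` in this basis, the
constraint `0 < k < q_{m+1}` forces coefficients of opposite signs, whence
`|k α - l| ≥ |q_m α - p_m|` with equality only at `(k, l) = (q_m, p_m)`.
-/

/-- Distance from a real number to the nearest integer (the torus norm on ℝ/ℤ). -/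
noncomputable def nint (t : ℝ) : ℝ := |t - round t|

/-- The `L_q` distance (for `1 ≤ q ≤ ∞`) between two points of the torus `ℝ^d/ℤ^d`,
computed on representatives in `ℝ^d`. -/
noncomputable def lqDist (q : ℝ≥0∞) {d : ℕ} (x y : Fin d → ℝ) : ℝ :=
  if q = ⊤ then ⨆ i, nint (x i - y i)
  else (∑ i, nint (x i - y i) ^ q.toReal) ^ (1 / q.toReal)

/-- The `n`-th point of the `d`-dimensional Kronecker sequence `z_n = nα + ℤ^d`
(as a representative in `ℝ^d`). -/
noncomputable def kron {d : ℕ} (α : Fin d → ℝ) (n : ℕ) : Fin d → ℝ :=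
  fun c => (n : ℝ) * α c

/-- `L_q`-distance on the torus between the `i`-th and `j`-th points of the
Kronecker sequence of `α`. -/
noncomputable def kronDist (q : ℝ≥0∞) {d : ℕ} (α : Fin d → ℝ) (i j : ℕ) : ℝ :=
  lqDist q (kron α i) (kron α j)

/-- The index `j ∈ {1, …, N} \ {i}` of the nearest neighbor of `z_i` in
`S_N = {z_1, …, z_N}` w.r.t. the `L_q` torus metric; ties are broken by taking
the largest such index. -/
noncomputable def nnIndex (q : ℝ≥0∞) {d : ℕ} (α : Fin d → ℝ) (N i : ℕ) : ℕ :=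
  sSup {j : ℕ | j ∈ Finset.Icc 1 N ∧ j ≠ i ∧
    ∀ m ∈ Finset.Icc 1 N, m ≠ i → kronDist q α i j ≤ kronDist q α i m}

/-- `h_i(N) = |j - i|` where `z_j` is the nearest neighbor of `z_i` in `S_N`:
the counting-metric distance of `z_i` to its nearest neighbor. -/
noncomputable def hFun (q : ℝ≥0∞) {d : ℕ} (α : Fin d → ℝ) (N i : ℕ) : ℕ :=
  Nat.dist (nnIndex q α N i) i

/-- `g_N(α, ℤ^d, ‖·‖_q)`: the number of distinct nearest neighbor distances
among `d_q(z_i, nn_1(z_i))`, `i = 1, …, N`. -/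
noncomputable def gN (q : ℝ≥0∞) {d : ℕ} (α : Fin d → ℝ) (N : ℕ) : ℕ :=
  ((Finset.Icc 1 N).image (fun i => kronDist q α i (nnIndex q α N i))).card

/-- The Gauss map `x ↦ {1/x}` generating the continued fraction expansion. -/
noncomputable def gaussMap (x : ℝ) : ℝ := Int.fract x⁻¹

/-- The partial quotients of the continued fraction expansion `[0; a_1, a_2, …]`
of an irrational `α ∈ (0,1)`: `a_n = ⌊1 / G^[n-1](α)⌋` (with `a_0 = 0`). -/
noncomputable def cfA (α : ℝ) : ℕ → ℕ
  | 0 => 0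
  | n + 1 => (⌊(gaussMap^[n] α)⁻¹⌋).toNat

/-- The denominators of the convergents of the continued fraction of `α`:
`q_0 = 1`, `q_1 = a_1`, `q_n = a_n q_{n-1} + q_{n-2}`. -/
noncomputable def cfQ (α : ℝ) : ℕ → ℕ
  | 0 => 1
  | 1 => cfA α 1
  | n + 2 => cfA α (n + 2) * cfQ α (n + 1) + cfQ α n

lemma nint_add_intCast (t : ℝ) (k : ℤ) : nint (t + k) = nint t := by
  simp only [nint, round_add_intCast, Int.cast_add, add_sub_add_right_eq_sub]

lemma nint_neg (t : ℝ) : nint (-t) = nint t := by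
  have h : ∀ s : ℝ, nint (-s) ≤ nint s := fun s => by
    calc nint (-s) ≤ |-s - ((-round s : ℤ) : ℝ)| := round_le (-s) (-round s)
      _ = nint s := by rw [nint, ← abs_neg]; push_cast; ring_nf
  exact le_antisymm (h t) (by simpa using h (-t))

section ContinuedFraction

variable (α : ℝ)

noncomputable def gaussIter (k : ℕ) : ℝ := gaussMap^[k] α

noncomputable def cfP : ℕ → ℕ
  | 0 => 0
  | 1 => 1
  | n + 2 => cfA α (n + 2) * cfP (n + 1) + cfP n

noncomputable def gaussProd (k : ℕ) : ℝ := ∏ j ∈ Finset.range (k + 1), gaussIter α j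

lemma gaussIter_succ (k : ℕ) : gaussIter α (k + 1) = Int.fract (gaussIter α k)⁻¹ := by
  rw [gaussIter, Function.iterate_succ_apply']
  rfl

lemma cfA_succ (k : ℕ) : cfA α (k + 1) = ⌊(gaussIter α k)⁻¹⌋.toNat := rfl

lemma gaussProd_zero : gaussProd α 0 = α := by simp [gaussProd, gaussIter]

lemma gaussProd_succ (k : ℕ) : gaussProd α (k + 1) = gaussProd α k * gaussIter α (k + 1) :=
  Finset.prod_range_succ _ _

lemma cfQ_add_two (n : ℕ) : cfQ α (n + 2) = cfA α (n + 2) * cfQ α (n + 1) + cfQ α n := rfl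

lemma cfP_add_two (n : ℕ) : cfP α (n + 2) = cfA α (n + 2) * cfP α (n + 1) + cfP α n := rfl

lemma cfP_mul_cfQ_sub_cfP_mul_cfQ (m : ℕ) :
    (cfP α (m + 1) : ℤ) * cfQ α m - cfP α m * cfQ α (m + 1) = (-1) ^ m := by
  induction m with
  | zero => simp [cfP, cfQ]
  | succ m ih =>
    push_cast [cfQ_add_two, cfP_add_two]
    linear_combination -ih

lemma exists_eq_cfQ_combination_and_eq_cfP_combination (m : ℕ) (k l : ℤ) :
    ∃ x y : ℤ, x * cfQ α m + y * cfQ α (m + 1) = k ∧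
      x * cfP α m + y * cfP α (m + 1) = l := by
  have hdet := cfP_mul_cfQ_sub_cfP_mul_cfQ α m
  have hsq : (-1 : ℤ) ^ m * (-1) ^ m = 1 := by
    rw [← pow_add]
    exact Even.neg_one_pow ⟨m, rfl⟩
  refine ⟨(-1) ^ m * (cfP α (m + 1) * k - cfQ α (m + 1) * l),
    (-1) ^ m * (cfQ α m * l - cfP α m * k), ?_, ?_⟩
  · linear_combination ((-1 : ℤ) ^ m * k) * hdet + k * hsq
  · linear_combination ((-1 : ℤ) ^ m * l) * hdet + l * hsq

variable {α}

lemma irrational_gaussIter (hirr : Irrational α) (k : ℕ) : Irrational (gaussIter α k) := by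
  induction k with
  | zero => exact hirr
  | succ k ih =>
    rw [gaussIter_succ, Int.fract]
    exact ih.inv.sub_intCast _

lemma gaussIter_mem_Ioo (hα : α ∈ Set.Ioo 0 1) (hirr : Irrational α) (k : ℕ) :
    gaussIter α k ∈ Set.Ioo 0 1 := by
  cases k with
  | zero => exact hα
  | succ k =>
    rw [gaussIter_succ]
    exact ⟨Int.fract_pos.mpr ((irrational_gaussIter hirr k).inv.ne_int _), Int.fract_lt_one _⟩

lemma gaussProd_pos (hα : α ∈ Set.Ioo 0 1) (hirr : Irrational α) (k : ℕ) :
    0 < gaussProd α k :=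
  Finset.prod_pos fun j _ => (gaussIter_mem_Ioo hα hirr j).1

lemma one_le_floor_inv_gaussIter (hα : α ∈ Set.Ioo 0 1) (hirr : Irrational α) (k : ℕ) :
    1 ≤ ⌊(gaussIter α k)⁻¹⌋ := by
  obtain ⟨hpos, hlt⟩ := gaussIter_mem_Ioo hα hirr k
  exact Int.le_floor.mpr (by simpa using (one_lt_inv₀ hpos).mpr hlt |>.le)

lemma one_le_cfA_succ (hα : α ∈ Set.Ioo 0 1) (hirr : Irrational α) (k : ℕ) :
    1 ≤ cfA α (k + 1) := by
  have := one_le_floor_inv_gaussIter hα hirr k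
  rw [cfA_succ]
  omega

lemma cfA_succ_mul_gaussIter (hα : α ∈ Set.Ioo 0 1) (hirr : Irrational α) (k : ℕ) :
    (cfA α (k + 1) : ℝ) * gaussIter α k = 1 - gaussIter α k * gaussIter α (k + 1) := by
  have hfloor := one_le_floor_inv_gaussIter hα hirr k
  have hcast : (cfA α (k + 1) : ℝ) = ⌊(gaussIter α k)⁻¹⌋ := by
    rw [cfA_succ]
    exact_mod_cast Int.toNat_of_nonneg (by omega)
  rw [hcast, gaussIter_succ, Int.fract, mul_sub,
    mul_inv_cancel₀ (gaussIter_mem_Ioo hα hirr k).1.ne']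
  ring

lemma cfQ_pos (hα : α ∈ Set.Ioo 0 1) (hirr : Irrational α) : ∀ k, 0 < cfQ α k := by
  refine Nat.twoStepInduction (by simp [cfQ]) ?_ fun n hn _ => ?_
  · exact one_le_cfA_succ hα hirr 0
  · rw [cfQ_add_two]
    omega

lemma cfQ_mul_sub_cfP (hα : α ∈ Set.Ioo 0 1) (hirr : Irrational α) (k : ℕ) :
    cfQ α k * α - cfP α k = (-1) ^ k * gaussProd α k := by
  induction k using Nat.twoStepInduction with
  | zero => simp [cfQ, cfP, gaussProd_zero]
  | one =>
    have ha := cfA_succ_mul_gaussIter hα hirr 0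
    rw [gaussProd_succ, gaussProd_zero]
    simp only [cfQ, cfP, gaussIter, Function.iterate_zero, id] at ha ⊢
    push_cast
    linear_combination ha
  | more n ih0 ih1 =>
    have ha := cfA_succ_mul_gaussIter hα hirr (n + 1)
    rw [gaussProd_succ] at ih1
    rw [gaussProd_succ, gaussProd_succ]
    push_cast [cfQ_add_two, cfP_add_two]
    linear_combination (cfA α (n + 2) : ℝ) * ih1 + ih0 -
      ((-1 : ℝ) ^ n * gaussProd α n) * ha

/-- Best approximation property of the convergent denominators. -/
lemma gaussProd_lt_abs_mul_sub (hα : α ∈ Set.Ioo 0 1) (hirr : Irrational α) (m : ℕ) (k l : ℤ)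
    (hk1 : 1 ≤ k) (hk2 : k < cfQ α (m + 1)) (hne : k ≠ cfQ α m ∨ l ≠ cfP α m) :
    gaussProd α m < |k * α - l| := by
  obtain ⟨x, y, hk, hl⟩ := exists_eq_cfQ_combination_and_eq_cfP_combination α m k l
  have hP := gaussProd_pos hα hirr m
  have hP' := gaussProd_pos hα hirr (m + 1)
  have hsplit : |k * α - l| = |x * gaussProd α m - y * gaussProd α (m + 1)| := by
    have hD := cfQ_mul_sub_cfP hα hirr m
    have hD' := cfQ_mul_sub_cfP hα hirr (m + 1)
    have hkR : (x : ℝ) * cfQ α m + y * cfQ α (m + 1) = k := by exact_mod_cast hk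
    have hlR : (x : ℝ) * cfP α m + y * cfP α (m + 1) = l := by exact_mod_cast hl
    rw [show (k : ℝ) * α - l = (-1) ^ m * (x * gaussProd α m - y * gaussProd α (m + 1)) by
      linear_combination -α * hkR + hlR + x * hD + y * hD', abs_mul, abs_neg_one_pow, one_mul]
  have hQ : (0 : ℤ) ≤ cfQ α m := Int.natCast_nonneg _
  rw [hsplit]
  rcases eq_or_ne y 0 with rfl | hy
  · have hx : 2 ≤ x := by
      simp only [zero_mul, add_zero] at hk hl
      have : x ≠ 1 := by rintro rfl; simp_all
      have : 1 ≤ x := by nlinarith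
      omega
    have hx' : (2 : ℝ) ≤ x := by exact_mod_cast hx
    rw [Int.cast_zero, zero_mul, sub_zero, abs_of_pos (by positivity)]
    nlinarith
  · -- `0 < k < q_{m+1}` forces `x` and `y` to have opposite signs.
    have hxy : (1 ≤ x ∧ y ≤ -1) ∨ (x ≤ -1 ∧ 1 ≤ y) := by
      rcases lt_trichotomy x 0 with hx | rfl | hx <;> rcases lt_or_gt_of_ne hy with hy' | hy'
      all_goals first | omega | (exfalso; nlinarith)
    rcases hxy with ⟨hx, hy'⟩ | ⟨hx, hy'⟩
    · have hx' : (1 : ℝ) ≤ x := by exact_mod_cast hx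
      have hy'' : (y : ℝ) ≤ -1 := by exact_mod_cast hy'
      exact lt_abs.mpr (Or.inl (by nlinarith))
    · have hx' : (x : ℝ) ≤ -1 := by exact_mod_cast hx
      have hy'' : (1 : ℝ) ≤ y := by exact_mod_cast hy'
      exact lt_abs.mpr (Or.inr (by nlinarith))

lemma nint_cfQ_mul_le_gaussProd (hα : α ∈ Set.Ioo 0 1) (hirr : Irrational α) (m : ℕ) :
    nint (cfQ α m * α) ≤ gaussProd α m := by
  calc nint (cfQ α m * α) ≤ |cfQ α m * α - ((cfP α m : ℤ) : ℝ)| := round_le _ _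
    _ = gaussProd α m := by
      rw [Int.cast_natCast, cfQ_mul_sub_cfP hα hirr, abs_mul, abs_neg_one_pow, one_mul,
        abs_of_pos (gaussProd_pos hα hirr m)]

lemma nint_cfQ_mul_lt_nint (hα : α ∈ Set.Ioo 0 1) (hirr : Irrational α) (m k : ℕ)
    (hk1 : 1 ≤ k) (hk2 : k < cfQ α (m + 1)) (hne : k ≠ cfQ α m) :
    nint (cfQ α m * α) < nint (k * α) :=
  (nint_cfQ_mul_le_gaussProd hα hirr m).trans_lt <| by
    simpa [nint] using gaussProd_lt_abs_mul_sub hα hirr m k (round (k * α))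
      (by exact_mod_cast hk1) (by exact_mod_cast hk2) (Or.inl (by exact_mod_cast hne))

end ContinuedFraction

/-- `‖(1, 1)‖_q`. -/
noncomputable def lqConst (q : ℝ≥0∞) : ℝ := if q = ⊤ then 1 else 2 ^ (1 / q.toReal)

lemma lqConst_pos (q : ℝ≥0∞) : 0 < lqConst q := by
  unfold lqConst
  split_ifs
  exacts [one_pos, Real.rpow_pos_of_pos two_pos _]

lemma kronDist_eq_lqConst_mul_nint {q : ℝ≥0∞} (hq : q ≠ 0) (a : ℝ) (i j : ℕ) :
    kronDist q ![a, 1 - a] i j = lqConst q * nint ((j - i) * a) := by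
  have hcoord : ∀ c, nint (kron ![a, 1 - a] i c - kron ![a, 1 - a] j c) =
      nint ((j - i) * a) := by
    intro c
    fin_cases c
    · rw [← nint_neg]
      simp only [kron, Fin.zero_eta, Matrix.cons_val_zero]
      ring_nf
    · rw [← nint_add_intCast ((j - i) * a) ((i : ℤ) - j)]
      simp only [kron, Fin.mk_one, Matrix.cons_val_one, Matrix.cons_val_zero]
      push_cast
      ring_nf
  simp only [kronDist, lqDist, lqConst, hcoord]
  split_ifs with htop
  · simp
  · have hp : 0 < q.toReal := ENNReal.toReal_pos hq htop
    have hv : 0 ≤ nint ((j - i) * a) := abs_nonneg _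
    rw [Fin.sum_univ_two, ← two_mul, Real.mul_rpow zero_le_two (by positivity),
      ← Real.rpow_mul hv, mul_one_div_cancel hp.ne', Real.rpow_one]

lemma nnIndex_eq_of_forall_lt {q : ℝ≥0∞} {d : ℕ} {α : Fin d → ℝ} {N i j : ℕ}
    (hj : j ∈ Finset.Icc 1 N) (hji : j ≠ i)
    (hlt : ∀ m ∈ Finset.Icc 1 N, m ≠ i → m ≠ j → kronDist q α i j < kronDist q α i m) :
    nnIndex q α N i = j := by
  suffices h : {m | m ∈ Finset.Icc 1 N ∧ m ≠ i ∧
      ∀ m' ∈ Finset.Icc 1 N, m' ≠ i → kronDist q α i m ≤ kronDist q α i m'} = {j} by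
    rw [nnIndex, h, csSup_singleton]
  ext m
  refine ⟨fun hm => ?_, fun hm => ?_⟩
  · obtain ⟨hm, hmi, hmin⟩ := hm
    by_contra hmj
    exact (hmin j hj hji).not_gt (hlt m hm hmi hmj)
  · rw [Set.mem_singleton_iff.mp hm]
    refine ⟨hj, hji, fun m hm hmi => ?_⟩
    rcases eq_or_ne m j with rfl | hmj
    exacts [le_rfl, (hlt m hm hmi hmj).le]

theorem statement12_general (α1 : ℝ) (hmem : α1 ∈ Set.Ioo (1/2 : ℝ) 1) (hirr : Irrational α1)
    (q : ℝ≥0∞) (hq : 1 ≤ q) (i : ℕ) (n : ℕ)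
    (hn1 : cfQ α1 (i + 1) + 1 ≤ n) (hn2 : n ≤ cfQ α1 (i + 2)) :
    hFun q ![α1, 1 - α1] n 1 = cfQ α1 (i + 1) := by
  have hα : α1 ∈ Set.Ioo 0 1 := ⟨by linarith [hmem.1], hmem.2⟩
  have hq0 : q ≠ 0 := (zero_lt_one.trans_le hq).ne'
  have hQ := cfQ_pos hα hirr (i + 1)
  suffices nnIndex q ![α1, 1 - α1] n 1 = cfQ α1 (i + 1) + 1 by simp [hFun, this, Nat.dist]
  refine nnIndex_eq_of_forall_lt (by simp; omega) (by omega) fun m hm hm1 hmQ => ?_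
  obtain ⟨k, rfl⟩ : ∃ k, m = k + 1 := ⟨m - 1, by simp at hm; omega⟩
  rw [kronDist_eq_lqConst_mul_nint hq0, kronDist_eq_lqConst_mul_nint hq0]
  refine mul_lt_mul_of_pos_left ?_ (lqConst_pos q)
  simp only [Finset.mem_Icc] at hm
  simpa using nint_cfQ_mul_lt_nint hα hirr (i + 1) k (by omega) (hm.2.trans hn2) (by omega)

/-- For irrational `α_1 ∈ (1/2, 1)` with convergent denominators `(q_k)`,
`α = (α_1, 1 - α_1)` and `1 ≤ q ≤ ∞`: for every `i ≥ 1` and every `n` with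
`q_{i+1} + 1 ≤ n ≤ q_{i+2}`, one has `h_1(n) = q_{i+1}`. -/
theorem statement12 (α1 : ℝ) (hmem : α1 ∈ Set.Ioo (1/2 : ℝ) 1) (hirr : Irrational α1)
    (q : ℝ≥0∞) (hq : 1 ≤ q) (i : ℕ) (hi : 1 ≤ i) (n : ℕ)
    (hn1 : cfQ α1 (i + 1) + 1 ≤ n) (hn2 : n ≤ cfQ α1 (i + 2)) :
    hFun q ![α1, 1 - α1] n 1 = cfQ α1 (i + 1) :=
  statement12_general α1 hmem hirr q hq i n hn1 hn2
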